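/- arXiv:2406.13707 — 2 statements merged into one kernel-verified Lean document; each statement's English description precedes it below -/
import Mathlib

section
/- Let g_d < 0 and g_v < 0, and let d̃, ṽ : ℝ → ℝ be differentiable functions satisfying d̃'(t) = g_d·d̃(t) + ṽ(t) and ṽ'(t) = g_v·d̃(t) for all t. Then d̃(t) → 0 and ṽ(t) → 0 as t → +∞. -/
/-!
The quadratic form `W = 2 g_v² d² - 2 g_d g_v d v + (g_d² - 2 g_v) v²` is a strict Lyapunov
function for the error dynamics: it is positive definite, and along solutions
`W' = 2 g_d g_v (g_v d² - v²)`, which is bounded by `-c W` for some `c > 0`. Grönwall's inequality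
then gives `W(t) ≤ W(0) e^{-ct} → 0`, and positive definiteness transfers the decay to `d` and `v`.
-/

open Filter Topology Real

theorem le_mul_exp_of_hasDerivAt_le_neg_mul {f f' : ℝ → ℝ} {c : ℝ}
    (hf : ∀ t, HasDerivAt f (f' t) t) (hle : ∀ t, f' t ≤ -c * f t) {t : ℝ} (ht : 0 ≤ t) :
    f t ≤ f 0 * exp (-c * t) := by
  have := le_gronwallBound_of_liminf_deriv_right_le (f := f) (f' := f') (δ := f 0) (K := -c)
    (ε := 0) (a := 0) (b := t) (fun s _ => (hf s).continuousAt.continuousWithinAt)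
    (fun s _ _ hr => (hf s).hasDerivWithinAt.liminf_right_slope_le hr) le_rfl
    (fun s _ => by simpa using hle s) t ⟨ht, le_rfl⟩
  simpa [gronwallBound_ε0] using this

theorem tendsto_zero_of_hasDerivAt_le_neg_mul {f f' : ℝ → ℝ} {c : ℝ} (hc : 0 < c)
    (hf : ∀ t, HasDerivAt f (f' t) t) (hle : ∀ t, f' t ≤ -c * f t) (hnonneg : ∀ t, 0 ≤ f t) :
    Tendsto f atTop (𝓝 0) := by
  have hexp : Tendsto (fun t => f 0 * exp (-c * t)) atTop (𝓝 0) := by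
    simpa using (tendsto_exp_atBot.comp
      (tendsto_id.const_mul_atTop_of_neg (neg_neg_of_pos hc))).const_mul (f 0)
  exact squeeze_zero' (.of_forall hnonneg)
    ((eventually_ge_atTop 0).mono fun t ht => le_mul_exp_of_hasDerivAt_le_neg_mul hf hle ht) hexp

theorem tendsto_zero_of_mul_sq_le {α : Type*} {l : Filter α} {f g : α → ℝ} {k : ℝ} (hk : 0 < k)
    (hfg : ∀ x, k * f x ^ 2 ≤ g x) (hg : Tendsto g l (𝓝 0)) : Tendsto f l (𝓝 0) := by
  have hsqrt : Tendsto (fun x => √(g x / k)) l (𝓝 0) := by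
    simpa using (hg.div_const k).sqrt
  exact squeeze_zero_norm (fun x => abs_le_sqrt <| (le_div_iff₀' hk).2 (hfg x)) hsqrt

def lyapunov (g_d g_v x y : ℝ) : ℝ :=
  2 * g_v ^ 2 * x ^ 2 - 2 * g_d * g_v * x * y + (g_d ^ 2 - 2 * g_v) * y ^ 2

section

variable {g_d g_v : ℝ}

theorem hasDerivAt_lyapunov {d v : ℝ → ℝ} (hd : ∀ t, HasDerivAt d (g_d * d t + v t) t)
    (hv : ∀ t, HasDerivAt v (g_v * d t) t) (t : ℝ) :
    HasDerivAt (fun s => lyapunov g_d g_v (d s) (v s))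
      (-(2 * g_d * g_v) * (-g_v * d t ^ 2 + v t ^ 2)) t := by
  refine (((((hd t).pow 2).const_mul (2 * g_v ^ 2)).sub
    (((hd t).const_mul (2 * g_d * g_v)).mul (hv t))).add
      (((hv t).pow 2).const_mul (g_d ^ 2 - 2 * g_v))).congr_deriv ?_
  push_cast
  ring

theorem lyapunov_le (hgd : g_d < 0) (hgv : g_v < 0) (x y : ℝ) :
    lyapunov g_d g_v x y ≤ (g_d ^ 2 - g_d - 4 * g_v + g_d * g_v) * (-g_v * x ^ 2 + y ^ 2) := by
  have hgd' : 0 ≤ -g_d := by linarith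
  have hgv' : 0 ≤ -g_v := by linarith
  unfold lyapunov
  nlinarith [mul_nonneg (mul_pos_of_neg_of_neg hgd hgv).le (sq_nonneg (x + y)),
    mul_nonneg (mul_nonneg hgv' (sq_nonneg g_d)) (sq_nonneg x),
    mul_nonneg (mul_nonneg hgd' (sq_nonneg g_v)) (sq_nonneg x),
    mul_nonneg (sq_nonneg g_v) (sq_nonneg x), mul_nonneg hgd' (sq_nonneg y),
    mul_nonneg hgv' (sq_nonneg y)]

theorem mul_sq_fst_le_lyapunov (x y : ℝ) :
    g_v ^ 2 * (g_d ^ 2 - 4 * g_v) * x ^ 2 ≤ (g_d ^ 2 - 2 * g_v) * lyapunov g_d g_v x y := by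
  unfold lyapunov
  nlinarith [sq_nonneg (g_d * g_v * x - (g_d ^ 2 - 2 * g_v) * y)]

theorem mul_sq_snd_le_lyapunov (x y : ℝ) :
    g_v ^ 2 * (g_d ^ 2 - 4 * g_v) * y ^ 2 ≤ 2 * g_v ^ 2 * lyapunov g_d g_v x y := by
  unfold lyapunov
  nlinarith [sq_nonneg (2 * g_v ^ 2 * x - g_d * g_v * y)]

theorem lyapunov_nonneg (hgv : g_v < 0) (x y : ℝ) : 0 ≤ lyapunov g_d g_v x y := by
  have hpos : 0 < 2 * g_v ^ 2 := by linarith [sq_pos_of_neg hgv]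
  have hsq : 0 ≤ g_v ^ 2 * (g_d ^ 2 - 4 * g_v) * y ^ 2 := by
    have : 0 ≤ g_d ^ 2 - 4 * g_v := by nlinarith [sq_nonneg g_d]
    positivity
  exact nonneg_of_mul_nonneg_right (hsq.trans (mul_sq_snd_le_lyapunov x y)) hpos

theorem neg_mul_le_neg_mul_lyapunov (hgd : g_d < 0) (hgv : g_v < 0) (x y : ℝ) :
    -(2 * g_d * g_v) * (-g_v * x ^ 2 + y ^ 2) ≤
      -(2 * g_d * g_v / (g_d ^ 2 - g_d - 4 * g_v + g_d * g_v)) * lyapunov g_d g_v x y := by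
  have hk : 0 < 2 * g_d * g_v := by nlinarith
  have hN : 0 < g_d ^ 2 - g_d - 4 * g_v + g_d * g_v := by nlinarith [sq_nonneg g_d]
  have : 2 * g_d * g_v / (g_d ^ 2 - g_d - 4 * g_v + g_d * g_v) * lyapunov g_d g_v x y ≤
      2 * g_d * g_v * (-g_v * x ^ 2 + y ^ 2) := by
    rw [div_mul_eq_mul_div, div_le_iff₀ hN]
    linarith [mul_le_mul_of_nonneg_left (lyapunov_le hgd hgv x y) hk.le]
  linarith

end

theorem stmt_4 (g_d g_v : ℝ) (hgd : g_d < 0) (hgv : g_v < 0)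
    (d v : ℝ → ℝ)
    (hd : ∀ t, HasDerivAt d (g_d * d t + v t) t)
    (hv : ∀ t, HasDerivAt v (g_v * d t) t) :
    Filter.Tendsto d Filter.atTop (nhds 0) ∧ Filter.Tendsto v Filter.atTop (nhds 0) := by
  have hc : 0 < 2 * g_d * g_v / (g_d ^ 2 - g_d - 4 * g_v + g_d * g_v) := by
    apply div_pos <;> nlinarith [sq_nonneg g_d]
  have hW : Tendsto (fun t => lyapunov g_d g_v (d t) (v t)) atTop (𝓝 0) :=
    tendsto_zero_of_hasDerivAt_le_neg_mul hc (hasDerivAt_lyapunov hd hv)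
      (fun t => neg_mul_le_neg_mul_lyapunov hgd hgv _ _) (fun t => lyapunov_nonneg hgv _ _)
  have hk : 0 < g_v ^ 2 * (g_d ^ 2 - 4 * g_v) :=
    mul_pos (sq_pos_of_neg hgv) (by nlinarith [sq_nonneg g_d])
  exact ⟨tendsto_zero_of_mul_sq_le hk (fun t => mul_sq_fst_le_lyapunov _ _)
      (by simpa using hW.const_mul (g_d ^ 2 - 2 * g_v)),
    tendsto_zero_of_mul_sq_le hk (fun t => mul_sq_snd_le_lyapunov _ _)
      (by simpa using hW.const_mul (2 * g_v ^ 2))⟩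
end

section
/- In the setting of the estimator error dynamics with angular coupling (d̃_x' = g_d·d̃_x + ṽ_x, ṽ_x' = g_v·d̃_x − a_x + p·ω·d̃_y + ω·ṽ_y, d̃_y' = g_d·d̃_y + ṽ_y, ṽ_y' = g_v·d̃_y − a_y − p·ω·d̃_x − ω·ṽ_x), with g_v < 0, r = −2p, r > 1, r² + r·g_d − g_v = 0, k_d := −(|g_v|·g_d + r²/4), and with a_x(t)² + a_y(t)² ≤ a_max² for all t, the composite Lyapunov function V = ½((r·d̃_x − ṽ_x)² + |g_v|·d̃_x² + ṽ_x²) + ½((r·d̃_y − ṽ_y)² + |g_v|·d̃_y² + ṽ_y²) satisfies, for all t, V'(t) ≤ (1 − r)·((r·d̃_x − ṽ_x)² + (r·d̃_y − ṽ_y)²) − k_d·(d̃_x² + d̃_y²) + 2·a_max². -/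
/-!
Split `V` into one quadratic form per axis, `W(d, v) = ½((r d - v)² + |g_v| d² + v²)`.
With `e = r d - v`, the characteristic equation `r² + r g_d - g_v = 0` turns the derivative of
`W` along one axis into `-r e² + |g_v| g_d d² + a (2e - r d)` plus a term `(2v - r d) u`
coming from the rotational coupling `u`. Since `r = -2p`, the coupling terms of the two axes
are `±2ω (v_x + p d_x)(v_y + p d_y)` and cancel, and the forcing term is absorbed by
`2ae ≤ e² + a²` and `-a r d ≤ r² d² / 4 + a²`.
-/

noncomputable def axisEnergy (r c d v : ℝ) : ℝ := (1 / 2) * ((r * d - v) ^ 2 + c * d ^ 2 + v ^ 2)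

theorem hasDerivAt_axisEnergy {r c d' v' t : ℝ} {d v : ℝ → ℝ}
    (hd : HasDerivAt d d' t) (hv : HasDerivAt v v' t) :
    HasDerivAt (fun s => axisEnergy r c (d s) (v s))
      ((r * d t - v t) * (r * d' - v') + c * d t * d' + v t * v') t := by
  have h := (((((hd.const_mul r).sub hv).pow 2).add ((hd.pow 2).const_mul c)).add
    (hv.pow 2)).const_mul (1 / 2)
  exact h.congr_deriv (by simp only [Pi.sub_apply]; ring)

theorem axisEnergy_deriv_le {g_d g_v r : ℝ} (hgv : g_v ≤ 0)
    (hchar : r ^ 2 + r * g_d - g_v = 0) (d v a u : ℝ) :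
    (r * d - v) * (r * (g_d * d + v) - (g_v * d - a + u)) + |g_v| * d * (g_d * d + v)
        + v * (g_v * d - a + u)
      ≤ (1 - r) * (r * d - v) ^ 2 + (|g_v| * g_d + r ^ 2 / 4) * d ^ 2 + 2 * a ^ 2
        + (2 * v - r * d) * u := by
  rw [abs_of_nonpos hgv]
  linear_combination
    sq_nonneg (r * d - v - a) + sq_nonneg (r / 2 * d + a) + d * (r * d - v) * hchar

theorem stmt_7_general (g_d g_v p r k_d a_max : ℝ) (hgv : g_v < 0) (hrp : r = -2 * p)
    (hchar : r ^ 2 + r * g_d - g_v = 0)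
    (hkd : k_d = -(|g_v| * g_d + r ^ 2 / 4))
    (ω ax ay : ℝ → ℝ) (ha : ∀ t, (ax t) ^ 2 + (ay t) ^ 2 ≤ a_max ^ 2)
    (dx vx dy vy : ℝ → ℝ)
    (hdx : ∀ t, HasDerivAt dx (g_d * dx t + vx t) t)
    (hvx : ∀ t, HasDerivAt vx (g_v * dx t - ax t + p * ω t * dy t + ω t * vy t) t)
    (hdy : ∀ t, HasDerivAt dy (g_d * dy t + vy t) t)
    (hvy : ∀ t, HasDerivAt vy (g_v * dy t - ay t - p * ω t * dx t - ω t * vx t) t) :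
    ∀ t,
      deriv (fun s => (1 / 2) * ((r * dx s - vx s) ^ 2 + |g_v| * (dx s) ^ 2 + (vx s) ^ 2)
        + (1 / 2) * ((r * dy s - vy s) ^ 2 + |g_v| * (dy s) ^ 2 + (vy s) ^ 2)) t
      ≤ (1 - r) * ((r * dx t - vx t) ^ 2 + (r * dy t - vy t) ^ 2)
        - k_d * ((dx t) ^ 2 + (dy t) ^ 2) + 2 * a_max ^ 2 := by
  intro t
  let V s := axisEnergy r |g_v| (dx s) (vx s) + axisEnergy r |g_v| (dy s) (vy s)
  have hV : HasDerivAt V _ t :=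
    (hasDerivAt_axisEnergy (hdx t) (hvx t)).add (hasDerivAt_axisEnergy (hdy t) (hvy t))
  change deriv V t ≤ _
  rw [hV.deriv]
  have hx := axisEnergy_deriv_le hgv.le hchar (dx t) (vx t) (ax t) (p * ω t * dy t + ω t * vy t)
  have hy := axisEnergy_deriv_le hgv.le hchar (dy t) (vy t) (ay t) (-(p * ω t * dx t) - ω t * vx t)
  have hcoupling : (2 * vx t - r * dx t) * (p * ω t * dy t + ω t * vy t)
      + (2 * vy t - r * dy t) * (-(p * ω t * dx t) - ω t * vx t) = 0 := by
    subst hrp; ring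
  subst hkd
  linear_combination hx + hy + hcoupling + 2 * ha t

theorem stmt_7 (g_d g_v p r k_d a_max : ℝ) (hgv : g_v < 0) (hrp : r = -2 * p)
    (hr : r > 1) (hchar : r ^ 2 + r * g_d - g_v = 0)
    (hkd : k_d = -(|g_v| * g_d + r ^ 2 / 4))
    (ω ax ay : ℝ → ℝ) (ha : ∀ t, (ax t) ^ 2 + (ay t) ^ 2 ≤ a_max ^ 2)
    (dx vx dy vy : ℝ → ℝ)
    (hdx : ∀ t, HasDerivAt dx (g_d * dx t + vx t) t)
    (hvx : ∀ t, HasDerivAt vx (g_v * dx t - ax t + p * ω t * dy t + ω t * vy t) t)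
    (hdy : ∀ t, HasDerivAt dy (g_d * dy t + vy t) t)
    (hvy : ∀ t, HasDerivAt vy (g_v * dy t - ay t - p * ω t * dx t - ω t * vx t) t) :
    ∀ t,
      deriv (fun s => (1 / 2) * ((r * dx s - vx s) ^ 2 + |g_v| * (dx s) ^ 2 + (vx s) ^ 2)
        + (1 / 2) * ((r * dy s - vy s) ^ 2 + |g_v| * (dy s) ^ 2 + (vy s) ^ 2)) t
      ≤ (1 - r) * ((r * dx t - vx t) ^ 2 + (r * dy t - vy t) ^ 2)
        - k_d * ((dx t) ^ 2 + (dy t) ^ 2) + 2 * a_max ^ 2 :=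
  stmt_7_general g_d g_v p r k_d a_max hgv hrp hchar hkd ω ax ay ha dx vx dy vy hdx hvx hdy hvy
end
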